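/- The linear span of nonempty planar forests, equipped with concatenation m and the root-grafting product ↘, is generated as an algebra over the operations {m, ↘} by the single-vertex tree •: every planar forest of weight n lies in the span of all n-ary operations built from m and ↘ applied to n copies of •. -/

import Mathlib

/-- Planar rooted trees; `PTree.node []` is the single-vertex tree `•`. -/
inductive PTree : Type
  | node : List PTree → PTree

/-- Planar rooted forests; the product `m` is concatenation (list append). -/
abbrev Forest : Type := List PTree

/-- Grafting on the root: `F ↘ G` grafts `F` on the left of the root of the first tree
of `G`; in particular `B⁺(F) = F ↘ •`. -/
def graftRoot (F : Forest) : Forest → Forest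
  | [] => F
  | .node c :: rest => .node (F ++ c) :: rest

/-!
A forest `t₁ ⋯ tₖ` is the concatenation of the one-tree forests `tᵢ`, and a tree
`B⁺(c)` with a nonempty forest of children `c` equals `c ↘ •`. Hence, by structural
induction on planar trees, every one-tree forest, and with it every nonempty forest,
is generated from `•`.
-/

theorem graftRoot_leaf (F : Forest) : graftRoot F [PTree.node []] = [PTree.node F] := by
  simp [graftRoot]

theorem List.mem_of_forall_singleton_mem {α : Type*} {S : Set (List α)}
    (hm : ∀ x ∈ S, ∀ y ∈ S, x ++ y ∈ S) :
    ∀ L : List α, L ≠ [] → (∀ a ∈ L, [a] ∈ S) → L ∈ S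
  | [], hL, _ => absurd rfl hL
  | [a], _, h => h a (List.mem_singleton_self a)
  | a :: b :: L, _, h =>
    hm [a] (h a List.mem_cons_self) (b :: L)
      (List.mem_of_forall_singleton_mem hm (b :: L) (List.cons_ne_nil b L)
        fun c hc => h c (List.mem_cons_of_mem a hc))

theorem singleton_mem_of_graftRoot_closed {S : Set Forest}
    (hone : [PTree.node []] ∈ S)
    (hm : ∀ x ∈ S, ∀ y ∈ S, x ++ y ∈ S)
    (hg : ∀ x ∈ S, ∀ y ∈ S, graftRoot x y ∈ S) :
    ∀ t : PTree, [t] ∈ S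
  | .node [] => hone
  | .node (c :: cs) => by
    have hchildren : c :: cs ∈ S :=
      List.mem_of_forall_singleton_mem hm _ (List.cons_ne_nil c cs) fun t _ =>
        singleton_mem_of_graftRoot_closed hone hm hg t
    simpa only [graftRoot_leaf] using hg _ hchildren _ hone

/-- Nonempty planar forests are generated from the single-vertex tree `•` by the two
operations `m` (concatenation) and `↘` (root grafting): every set of forests containing
`•` and closed under these operations contains all nonempty planar forests. -/
theorem forests_generated_by_m_and_graftRoot (S : Set Forest)
    (hone : [PTree.node []] ∈ S)
    (hm : ∀ x ∈ S, ∀ y ∈ S, x ++ y ∈ S)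
    (hg : ∀ x ∈ S, ∀ y ∈ S, graftRoot x y ∈ S) :
    ∀ F : Forest, F ≠ [] → F ∈ S := fun F hF =>
  List.mem_of_forall_singleton_mem hm F hF fun t _ =>
    singleton_mem_of_graftRoot_closed hone hm hg t
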